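/- arXiv:1709.02591 — 4 statements merged into one kernel-verified Lean document; each statement's English description precedes it below -/
import Mathlib

section
/- Let σ ∈ (0,1), K > 1, and let ξ, η ∈ ℝ^d satisfy |ξ − η| ≤ |η|/K. Then |⟨ξ⟩^σ − ⟨η⟩^σ| ≤ (K^σ − (K−1)^σ) · ⟨ξ − η⟩^σ. -/
open MeasureTheory Real
open scoped FourierTransform ENNReal

noncomputable section

/-- `ℝ^d` as a Euclidean space. -/
abbrev E (d : ℕ) := EuclideanSpace ℝ (Fin d)

/-- The Japanese bracket `⟨ξ⟩ = (1 + |ξ|²)^{1/2}`. -/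
def jap {d : ℕ} (ξ : E d) : ℝ := Real.sqrt (1 + ‖ξ‖ ^ 2)

/-- Concavity key lemma: `t ↦ (t+s)^σ - t^σ` is antitone on `[0,∞)`. -/
lemma key_anti {σ : ℝ} (hσ0 : 0 ≤ σ) (hσ1 : σ ≤ 1) {u v s : ℝ} (hu : 0 ≤ u)
    (huv : u ≤ v) (hs : 0 ≤ s) :
    (v + s) ^ σ - v ^ σ ≤ (u + s) ^ σ - u ^ σ := by
  rcases eq_or_lt_of_le huv with rfl | huv
  · exact le_rfl
  rcases eq_or_lt_of_le hs with rfl | hs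
  · simp
  have hv : 0 ≤ v := hu.trans huv.le
  have hden : 0 < v - u + s := by linarith
  set lam : ℝ := (v - u) / (v - u + s) with hlam
  have hlam0 : 0 < lam := div_pos (by linarith) hden
  have hlam1 : lam < 1 := (div_lt_one hden).2 (by linarith)
  have hcc := Real.concaveOn_rpow hσ0 hσ1
  have h1 := hcc.2 (Set.mem_Ici.2 hu) (Set.mem_Ici.2 (by linarith : (0:ℝ) ≤ v + s))
    hlam0.le (by linarith : (0:ℝ) ≤ 1 - lam) (by ring)
  have h2 := hcc.2 (Set.mem_Ici.2 hu) (Set.mem_Ici.2 (by linarith : (0:ℝ) ≤ v + s))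
    (by linarith : (0:ℝ) ≤ 1 - lam) hlam0.le (by ring)
  have he1 : lam • u + (1 - lam) • (v + s) = u + s := by
    simp only [smul_eq_mul, hlam]
    field_simp
    ring
  have he2 : (1 - lam) • u + lam • (v + s) = v := by
    simp only [smul_eq_mul, hlam]
    field_simp
    ring
  rw [he1] at h1
  rw [he2] at h2
  simp only [smul_eq_mul] at h1 h2
  linarith

set_option maxHeartbeats 1000000 in
/-- Gevrey triangle-type inequality: if `|ξ − η| ≤ |η|/K` then
`|⟨ξ⟩^σ − ⟨η⟩^σ| ≤ (K^σ − (K−1)^σ) ⟨ξ−η⟩^σ`. -/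
theorem stmt_1 {d : ℕ} (σ K : ℝ) (hσ0 : 0 < σ) (hσ1 : σ < 1) (hK : 1 < K)
    (ξ η : E d) (h : ‖ξ - η‖ ≤ ‖η‖ / K) :
    |jap ξ ^ σ - jap η ^ σ| ≤ (K ^ σ - (K - 1) ^ σ) * jap (ξ - η) ^ σ := by
  set r : ℝ := ‖ξ - η‖ with hr
  have hr0 : 0 ≤ r := norm_nonneg _
  have hK0 : 0 < K := by linarith
  have hηr : K * r ≤ ‖η‖ := by
    rw [le_div_iff₀ hK0] at h; linarith [h]
  set a : ℝ := jap ξ with ha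
  set b : ℝ := jap η with hb
  set c : ℝ := jap (ξ - η) with hc
  have hξn : 0 ≤ ‖ξ‖ := norm_nonneg _
  have hηn : 0 ≤ ‖η‖ := norm_nonneg _
  have ha0 : 1 ≤ a := by
    rw [ha, jap]
    exact Real.one_le_sqrt.2 (by nlinarith [sq_nonneg ‖ξ‖])
  have hb0 : 1 ≤ b := by
    rw [hb, jap]
    exact Real.one_le_sqrt.2 (by nlinarith [sq_nonneg ‖η‖])
  have hc0 : 1 ≤ c := by
    rw [hc, jap]
    exact Real.one_le_sqrt.2 (by nlinarith [sq_nonneg r])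
  have ha2 : a ^ 2 = 1 + ‖ξ‖ ^ 2 := Real.sq_sqrt (by positivity)
  have hb2 : b ^ 2 = 1 + ‖η‖ ^ 2 := Real.sq_sqrt (by positivity)
  have hc2 : c ^ 2 = 1 + r ^ 2 := Real.sq_sqrt (by positivity)
  have hηb : ‖η‖ ≤ b := by
    rw [hb, jap]
    nth_rewrite 1 [← Real.sqrt_sq hηn]
    exact Real.sqrt_le_sqrt (by linarith)
  have hξa : ‖ξ‖ ≤ a := by
    rw [ha, jap]
    nth_rewrite 1 [← Real.sqrt_sq hξn]
    exact Real.sqrt_le_sqrt (by linarith)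
  have hrc : r ≤ c := by
    rw [hc, jap]
    nth_rewrite 1 [← Real.sqrt_sq hr0]
    exact Real.sqrt_le_sqrt (by linarith)
  have hn1 : ‖ξ‖ ≤ ‖η‖ + r := by
    have := abs_le.1 (abs_norm_sub_norm_le ξ η); linarith [this.1, this.2]
  have hn2 : ‖η‖ ≤ ‖ξ‖ + r := by
    have := abs_le.1 (abs_norm_sub_norm_le ξ η); linarith [this.1]
  -- a ≤ b + r and b ≤ a + r
  have hab : a ≤ b + r := by
    have h1 : 1 + ‖ξ‖ ^ 2 ≤ (b + r) ^ 2 := by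
      nlinarith [mul_le_mul_of_nonneg_right hηb hr0,
        mul_self_le_mul_self hξn hn1]
    calc a = Real.sqrt (1 + ‖ξ‖ ^ 2) := rfl
      _ ≤ Real.sqrt ((b + r) ^ 2) := Real.sqrt_le_sqrt h1
      _ = b + r := Real.sqrt_sq (by linarith)
  have hba : b ≤ a + r := by
    have h1 : 1 + ‖η‖ ^ 2 ≤ (a + r) ^ 2 := by
      nlinarith [mul_le_mul_of_nonneg_right hξa hr0,
        mul_self_le_mul_self hηn hn2]
    calc b = Real.sqrt (1 + ‖η‖ ^ 2) := rfl
      _ ≤ Real.sqrt ((a + r) ^ 2) := Real.sqrt_le_sqrt h1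
      _ = a + r := Real.sqrt_sq (by linarith)
  have hbKr : K * r ≤ b := le_trans hηr hηb
  have haKr : (K - 1) * r ≤ a := by nlinarith
  have hCpos : 0 ≤ K ^ σ - (K - 1) ^ σ := by
    have := Real.rpow_le_rpow (by linarith : (0:ℝ) ≤ K - 1) (by linarith : K - 1 ≤ K) hσ0.le
    linarith
  have hrσc : r ^ σ ≤ c ^ σ := Real.rpow_le_rpow hr0 hrc hσ0.le
  have main : ∀ t : ℝ, 0 ≤ t → (K - 1) * r ≤ t →
      (t + r) ^ σ - t ^ σ ≤ (K ^ σ - (K - 1) ^ σ) * r ^ σ := by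
    intro t ht hKt
    have hkey := key_anti hσ0.le hσ1.le (mul_nonneg (by linarith) hr0) hKt hr0
    have heq : ((K - 1) * r + r) ^ σ - ((K - 1) * r) ^ σ
        = (K ^ σ - (K - 1) ^ σ) * r ^ σ := by
      have h1 : (K - 1) * r + r = K * r := by ring
      rw [h1, Real.mul_rpow hK0.le hr0,
        Real.mul_rpow (by linarith : (0:ℝ) ≤ K - 1) hr0]
      ring
    linarith
  have hfinal : |a ^ σ - b ^ σ| ≤ (K ^ σ - (K - 1) ^ σ) * r ^ σ := by
    rcases le_total a b with hle | hle
    · rw [abs_sub_comm, abs_of_nonneg (by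
        have := Real.rpow_le_rpow (by linarith : (0:ℝ) ≤ a) hle hσ0.le; linarith)]
      have h1 : b ^ σ ≤ (a + r) ^ σ :=
        Real.rpow_le_rpow (by linarith) hba hσ0.le
      have h2 := main a (by linarith) haKr
      linarith
    · rw [abs_of_nonneg (by
        have := Real.rpow_le_rpow (by linarith : (0:ℝ) ≤ b) hle hσ0.le; linarith)]
      have h1 : a ^ σ ≤ (b + r) ^ σ :=
        Real.rpow_le_rpow (by linarith) hab hσ0.le
      have h2 := main b (by linarith) (by nlinarith)
      linarith
  calc |a ^ σ - b ^ σ| ≤ (K ^ σ - (K - 1) ^ σ) * r ^ σ := hfinal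
    _ ≤ (K ^ σ - (K - 1) ^ σ) * c ^ σ := mul_le_mul_of_nonneg_left hrσc hCpos
end
end

section
/- Let σ ∈ (0,1) and K > 1. There exists c' ∈ (0,1), depending only on K and σ, such that for all ξ, η ∈ ℝ^d satisfying (1/K)·|ξ − η| ≤ |η| ≤ K·|ξ − η|, one has ⟨ξ⟩^σ ≤ ⟨η⟩^σ + c' · ⟨ξ − η⟩^σ. -/
open MeasureTheory Real
open scoped FourierTransform ENNReal

noncomputable section

/-!
For `0 < σ < 1` the increment `g(t) = (t + 1)^σ - t^σ` is strictly decreasing on `[0, ∞)`, with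
`g(0) = 1`. By homogeneity, `(u + v)^σ = u^σ + g(u / v) v^σ`. Apply this to `u = ⟨η⟩`,
`v = ⟨ξ - η⟩`: the hypothesis `|ξ - η| ≤ K|η|` gives `⟨ξ - η⟩ ≤ K⟨η⟩`, i.e. `u / v ≥ 1 / K`,
so `g(u / v) ≤ g(1 / K) =: c' < 1`. The triangle inequality `⟨ξ⟩ ≤ ⟨η⟩ + ⟨ξ - η⟩` finishes.
-/

theorem strictAntiOn_rpow_add_one_sub_rpow {σ : ℝ} (hσ0 : 0 < σ) (hσ1 : σ < 1) :
    StrictAntiOn (fun x : ℝ => (x + 1) ^ σ - x ^ σ) (Set.Ici 0) := by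
  have hcont : Continuous fun x : ℝ => x ^ σ := Real.continuous_rpow_const hσ0.le
  apply strictAntiOn_of_deriv_neg (convex_Ici 0)
  · exact ((hcont.comp (continuous_add_const 1)).sub hcont).continuousOn
  · rw [interior_Ici]
    intro x (hx : 0 < x)
    have hderiv : HasDerivAt (fun x : ℝ => (x + 1) ^ σ - x ^ σ)
        (σ * (x + 1) ^ (σ - 1) - σ * x ^ (σ - 1)) x := by
      have hshift : HasDerivAt (fun x : ℝ => (x + 1) ^ σ) (σ * (x + 1) ^ (σ - 1)) x := by
        simpa using ((hasDerivAt_id x).add_const 1).rpow_const (p := σ) (Or.inl (by positivity))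
      exact hshift.sub (Real.hasDerivAt_rpow_const (Or.inl hx.ne'))
    rw [hderiv.deriv, sub_neg, mul_lt_mul_iff_right₀ hσ0]
    exact Real.rpow_lt_rpow_of_neg hx (lt_add_one x) (by linarith)

theorem rpow_add_le_rpow_add_mul_rpow {σ s u v : ℝ} (hσ0 : 0 < σ) (hσ1 : σ < 1) (hs : 0 < s)
    (hv : 0 < v) (hsu : s * v ≤ u) :
    (u + v) ^ σ ≤ u ^ σ + ((s + 1) ^ σ - s ^ σ) * v ^ σ := by
  set t := u / v
  have hst : s ≤ t := (le_div_iff₀ hv).2 hsu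
  have ht : 0 ≤ t := hs.le.trans hst
  have hu : u = t * v := (div_mul_cancel₀ u hv.ne').symm
  have hdecr : (t + 1) ^ σ - t ^ σ ≤ (s + 1) ^ σ - s ^ σ :=
    (strictAntiOn_rpow_add_one_sub_rpow hσ0 hσ1).antitoneOn hs.le ht hst
  calc (u + v) ^ σ = t ^ σ * v ^ σ + ((t + 1) ^ σ - t ^ σ) * v ^ σ := by
        rw [hu, ← add_one_mul, Real.mul_rpow (by positivity) hv.le]
        ring
    _ ≤ u ^ σ + ((s + 1) ^ σ - s ^ σ) * v ^ σ := by
        rw [hu, Real.mul_rpow ht hv.le]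
        gcongr

theorem one_le_jap {d : ℕ} (ξ : E d) : 1 ≤ jap ξ :=
  Real.one_le_sqrt.2 (le_add_of_nonneg_right (by positivity))

theorem norm_le_jap {d : ℕ} (ξ : E d) : ‖ξ‖ ≤ jap ξ :=
  Real.le_sqrt_of_sq_le (le_add_of_nonneg_left zero_le_one)

theorem sq_jap {d : ℕ} (ξ : E d) : jap ξ ^ 2 = 1 + ‖ξ‖ ^ 2 :=
  Real.sq_sqrt (by positivity)

theorem jap_add_le {d : ℕ} (ξ η : E d) : jap (ξ + η) ≤ jap ξ + jap η := by
  refine Real.sqrt_le_iff.2 ⟨by linarith [one_le_jap ξ, one_le_jap η], ?_⟩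
  have hprod : ‖ξ‖ * ‖η‖ ≤ jap ξ * jap η :=
    mul_le_mul (norm_le_jap ξ) (norm_le_jap η) (norm_nonneg η) (by linarith [one_le_jap ξ])
  nlinarith [norm_add_le ξ η, norm_nonneg (ξ + η), sq_jap ξ, sq_jap η]

theorem jap_le_mul_jap_of_norm_le {d : ℕ} {K : ℝ} (hK : 1 ≤ K) {ξ η : E d}
    (h : ‖ξ‖ ≤ K * ‖η‖) : jap ξ ≤ K * jap η := by
  refine Real.sqrt_le_iff.2 ⟨by nlinarith [one_le_jap η], ?_⟩
  rw [mul_pow, sq_jap]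
  nlinarith [pow_le_pow_left₀ (norm_nonneg ξ) h 2, one_le_pow₀ (n := 2) hK]

/-- In the intermediate frequency region
`(1/K)|ξ−η| ≤ |η| ≤ K|ξ−η|`, there is `c' ∈ (0,1)` depending only on `K` and `σ`
with `⟨ξ⟩^σ ≤ ⟨η⟩^σ + c' ⟨ξ−η⟩^σ`. -/
theorem stmt_3 (σ K : ℝ) (hσ0 : 0 < σ) (hσ1 : σ < 1) (hK : 1 < K) :
    ∃ c' : ℝ, c' ∈ Set.Ioo (0 : ℝ) 1 ∧
      ∀ (d : ℕ) (ξ η : E d),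
        (1 / K) * ‖ξ - η‖ ≤ ‖η‖ → ‖η‖ ≤ K * ‖ξ - η‖ →
        jap ξ ^ σ ≤ jap η ^ σ + c' * jap (ξ - η) ^ σ := by
  have hs : 0 < 1 / K := by positivity
  refine ⟨(1 / K + 1) ^ σ - (1 / K) ^ σ, ⟨?_, ?_⟩, ?_⟩
  · exact sub_pos.2 (Real.rpow_lt_rpow hs.le (lt_add_one _) hσ0)
  · simpa [Real.zero_rpow hσ0.ne'] using
      strictAntiOn_rpow_add_one_sub_rpow hσ0 hσ1 (Set.mem_Ici.2 le_rfl) hs.le hs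
  · intro d ξ η hlower _
    have hupper : ‖ξ - η‖ ≤ K * ‖η‖ := by
      rwa [one_div_mul_eq_div, div_le_iff₀' (by positivity)] at hlower
    have hbracket : 1 / K * jap (ξ - η) ≤ jap η := by
      rw [one_div_mul_eq_div, div_le_iff₀' (by positivity)]
      exact jap_le_mul_jap_of_norm_le hK.le hupper
    calc jap ξ ^ σ ≤ (jap η + jap (ξ - η)) ^ σ := by
          gcongr
          · exact Real.sqrt_nonneg _
          · simpa using jap_add_le η (ξ - η)
      _ ≤ _ := rpow_add_le_rpow_add_mul_rpow hσ0 hσ1 hs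
          (by linarith [one_le_jap (ξ - η)]) hbracket
end
end

section
/- Let s > 1 and σ = 1/s. There is a constant C depending only on s such that for every integer n ≥ 1, setting m = ⌈nσ⌉ (so that nσ ≤ m < nσ + 1), one has (m!)^s / n! ≤ C · σ^n · n^{(3s−1)/2}. -/
open Real

noncomputable section

lemma sq_le_stirling (n : ℕ) (hn : 1 ≤ n) : Real.sqrt π ≤ Stirling.stirlingSeq n := by
  obtain ⟨k, rfl⟩ := Nat.exists_eq_add_of_le hn
  have h : Filter.Tendsto (Stirling.stirlingSeq ∘ Nat.succ) Filter.atTop (nhds (Real.sqrt π)) := by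
    have := Stirling.tendsto_stirlingSeq_sqrt_pi.comp (Filter.tendsto_add_atTop_nat 1)
    simpa [Function.comp_def, Nat.succ_eq_add_one] using this
  have := Stirling.stirlingSeq'_antitone.le_of_tendsto h k
  simpa [Function.comp, Nat.succ_eq_add_one, Nat.add_comm] using this

lemma stirling_le (n : ℕ) (hn : 1 ≤ n) : Stirling.stirlingSeq n ≤ exp 1 / Real.sqrt 2 := by
  obtain ⟨k, rfl⟩ := Nat.exists_eq_add_of_le hn
  have := Stirling.stirlingSeq'_antitone (Nat.zero_le k)
  simpa [Function.comp, Nat.succ_eq_add_one, Nat.add_comm] using this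

lemma fact_le (m : ℕ) (hm : 1 ≤ m) :
    (Nat.factorial m : ℝ) ≤ exp 1 * Real.sqrt m * ((m : ℝ) / exp 1) ^ m := by
  have hm0 : (0:ℝ) < (m:ℝ) := by exact_mod_cast hm
  have h2 : (0:ℝ) < Real.sqrt (2 * m) * ((m:ℝ) / exp 1) ^ m := by positivity
  have h := stirling_le m hm
  rw [Stirling.stirlingSeq, div_le_div_iff₀ h2 (by positivity)] at h
  calc (Nat.factorial m : ℝ) = Nat.factorial m * Real.sqrt 2 / Real.sqrt 2 := by
        field_simp
    _ ≤ exp 1 * (Real.sqrt (2*m) * ((m:ℝ)/exp 1)^m) / Real.sqrt 2 := by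
        exact div_le_div_of_nonneg_right h (by positivity)
    _ = exp 1 * Real.sqrt m * ((m : ℝ) / exp 1) ^ m := by
        rw [Real.sqrt_mul (by norm_num)]
        field_simp

lemma le_fact (n : ℕ) (hn : 1 ≤ n) :
    Real.sqrt n * ((n : ℝ) / exp 1) ^ n ≤ (Nat.factorial n : ℝ) := by
  have hn0 : (0:ℝ) < (n:ℝ) := by exact_mod_cast hn
  have h := sq_le_stirling n hn
  rw [Stirling.stirlingSeq, le_div_iff₀ (by positivity)] at h
  calc Real.sqrt n * ((n : ℝ) / exp 1) ^ n
      ≤ Real.sqrt π * (Real.sqrt (2*n) * ((n:ℝ)/exp 1)^n) := by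
        rw [Real.sqrt_mul (by norm_num), ← mul_assoc]
        have hπ : (1:ℝ) ≤ Real.sqrt π := by
          rw [show (1:ℝ) = Real.sqrt 1 by simp]
          exact Real.sqrt_le_sqrt (by linarith [Real.pi_gt_three])
        have h2' : (1:ℝ) ≤ Real.sqrt 2 := by
          rw [show (1:ℝ) = Real.sqrt 1 by simp]
          exact Real.sqrt_le_sqrt (by norm_num)
        have h1 : (1:ℝ) ≤ Real.sqrt π * Real.sqrt 2 := one_le_mul_of_one_le_of_one_le hπ h2'
        calc Real.sqrt n * ((n : ℝ) / exp 1) ^ n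
            ≤ (Real.sqrt π * Real.sqrt 2) * (Real.sqrt n * ((n : ℝ) / exp 1) ^ n) :=
              le_mul_of_one_le_left (by positivity) h1
          _ = Real.sqrt π * (Real.sqrt 2 * Real.sqrt n) * ((n:ℝ)/exp 1)^n := by ring
    _ ≤ Nat.factorial n := h

lemma log_fact_le (m : ℕ) (hm : 1 ≤ m) :
    Real.log (Nat.factorial m) ≤
      1 + (1/2) * Real.log m + m * Real.log m - m := by
  have hm0 : (0:ℝ) < (m:ℝ) := by exact_mod_cast hm
  have h := Real.log_le_log (by positivity) (fact_le m hm)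
  rw [Real.log_mul (by positivity) (by positivity), Real.log_mul (by positivity) (by positivity),
    Real.log_exp, Real.log_pow, Real.log_div hm0.ne' (exp_pos 1).ne', Real.log_exp,
    Real.log_sqrt hm0.le] at h
  calc Real.log (Nat.factorial m) ≤ 1 + Real.log m / 2 + m * (Real.log m - 1) := h
    _ = 1 + (1/2) * Real.log m + m * Real.log m - m := by ring

lemma le_log_fact (n : ℕ) (hn : 1 ≤ n) :
    (1/2) * Real.log n + n * Real.log n - n ≤ Real.log (Nat.factorial n) := by
  have hn0 : (0:ℝ) < (n:ℝ) := by exact_mod_cast hn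
  have h := Real.log_le_log (by positivity) (le_fact n hn)
  rw [Real.log_mul (by positivity) (by positivity),
    Real.log_pow, Real.log_div hn0.ne' (exp_pos 1).ne', Real.log_exp,
    Real.log_sqrt hn0.le] at h
  calc (1/2) * Real.log n + n * Real.log n - n
      = Real.log n / 2 + n * (Real.log n - 1) := by ring
    _ ≤ Real.log (Nat.factorial n) := h

set_option maxHeartbeats 1000000 in
/-- Stirling-type factorial estimate: for `s > 1`, `σ = 1/s`,
`n ≥ 1` and `m = ⌈nσ⌉`, one has `(m!)^s / n! ≤ C σ^n n^{(3s−1)/2}` with `C = C(s)`. -/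
theorem stmt_6 (s : ℝ) (hs : 1 < s) :
    ∃ C : ℝ, 0 < C ∧
      ∀ n : ℕ, 1 ≤ n →
        (Nat.factorial ⌈(n : ℝ) * (1 / s)⌉₊ : ℝ) ^ s / (Nat.factorial n : ℝ)
          ≤ C * (1 / s) ^ n * (n : ℝ) ^ ((3 * s - 1) / 2) := by
  have hs0 : (0:ℝ) < s := by linarith
  refine ⟨Real.exp (s^2 + 3*s), Real.exp_pos _, fun n hn => ?_⟩
  have hN : (1:ℝ) ≤ (n:ℝ) := by exact_mod_cast hn
  have hN0 : (0:ℝ) < (n:ℝ) := by linarith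
  have hσ0 : (0:ℝ) < 1/s := by positivity
  have hσ1 : 1/s < 1 := by rw [div_lt_one hs0]; linarith
  set m := ⌈(n : ℝ) * (1 / s)⌉₊ with hm_def
  have hm1 : 1 ≤ m := Nat.one_le_ceil_iff.mpr (by positivity)
  have hM0 : (0:ℝ) < (m:ℝ) := by exact_mod_cast hm1
  have hmge : (n:ℝ) * (1/s) ≤ (m:ℝ) := Nat.le_ceil _
  have hmlt : (m:ℝ) < (n:ℝ) * (1/s) + 1 := Nat.ceil_lt_add_one (by positivity)
  have hfm : (0:ℝ) < (Nat.factorial m : ℝ) := by exact_mod_cast Nat.factorial_pos m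
  have hfn : (0:ℝ) < (Nat.factorial n : ℝ) := by exact_mod_cast Nat.factorial_pos n
  have hX : (0:ℝ) < (Nat.factorial m : ℝ) ^ s / (Nat.factorial n : ℝ) := by positivity
  have hY : (0:ℝ) < Real.exp (s^2 + 3*s) * (1 / s) ^ n * (n : ℝ) ^ ((3 * s - 1) / 2) := by
    positivity
  rw [← Real.log_le_log_iff hX hY, Real.log_div (by positivity) hfn.ne',
    Real.log_rpow hfm, Real.log_mul (by positivity) (by positivity),
    Real.log_mul (by positivity) (by positivity), Real.log_exp, Real.log_pow,
    Real.log_rpow hN0]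
  -- abbreviations
  have ht_ge : (n:ℝ) ≤ (m:ℝ) * s := by
    have := mul_le_mul_of_nonneg_right hmge hs0.le
    calc (n:ℝ) = (n:ℝ) * (1/s) * s := by field_simp
      _ ≤ (m:ℝ) * s := this
  have ht_le : (m:ℝ) * s ≤ (n:ℝ) + s := by
    have := mul_le_mul_of_nonneg_right hmlt.le hs0.le
    calc (m:ℝ) * s ≤ ((n:ℝ) * (1/s) + 1) * s := this
      _ = (n:ℝ) + s := by field_simp
  have ht1 : (1:ℝ) ≤ (m:ℝ) * s := le_trans hN ht_ge
  have ht0 : (0:ℝ) < (m:ℝ) * s := by positivity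
  have hln0 : 0 ≤ Real.log n := Real.log_nonneg hN
  have hlσ0 : Real.log (1/s) ≤ 0 := Real.log_nonpos hσ0.le hσ1.le
  have hm2N : (m:ℝ) ≤ 2 * (n:ℝ) := by nlinarith
  have hlog2 : Real.log 2 ≤ 1 := by
    have := Real.log_le_sub_one_of_pos (by norm_num : (0:ℝ) < 2); linarith
  have hlm : Real.log m ≤ 1 + Real.log n := by
    have h1 : Real.log m ≤ Real.log (2 * n) := Real.log_le_log hM0 hm2N
    rw [Real.log_mul (by norm_num) hN0.ne'] at h1
    linarith
  have hlmt : Real.log m = Real.log ((m:ℝ)*s) + Real.log (1/s) := by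
    rw [← Real.log_mul ht0.ne' hσ0.ne']
    congr 1
    field_simp
  have hlt0 : 0 ≤ Real.log ((m:ℝ)*s) := Real.log_nonneg ht1
  have hltle : Real.log ((m:ℝ)*s) ≤ Real.log n + s / n := by
    have h1 : Real.log ((m:ℝ)*s) ≤ Real.log ((n:ℝ) + s) := Real.log_le_log ht0 ht_le
    have e1 : (n:ℝ) + s = (n:ℝ) * (1 + s/n) := by field_simp
    have h2 : Real.log ((n:ℝ) + s) = Real.log n + Real.log (1 + s/n) := by
      rw [e1, Real.log_mul hN0.ne' (by positivity)]
    have h3 : Real.log (1 + s/n) ≤ s/n := by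
      have := Real.log_le_sub_one_of_pos (show (0:ℝ) < 1 + s/n by positivity); linarith
    linarith
  have htlt : (m:ℝ)*s * Real.log ((m:ℝ)*s)
      ≤ (n:ℝ)*Real.log n + s*Real.log n + s + s^2 := by
    have a1 : (m:ℝ)*s * Real.log ((m:ℝ)*s) ≤ ((n:ℝ)+s) * Real.log ((m:ℝ)*s) :=
      mul_le_mul_of_nonneg_right ht_le hlt0
    have a2 : ((n:ℝ)+s) * Real.log ((m:ℝ)*s) ≤ ((n:ℝ)+s) * (Real.log n + s/n) :=
      mul_le_mul_of_nonneg_left hltle (by positivity)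
    have a3 : ((n:ℝ)+s) * (Real.log n + s/n)
        = (n:ℝ)*Real.log n + s*Real.log n + s + s^2/n := by
      field_simp; ring
    have a4 : s^2/n ≤ s^2 := div_le_self (by positivity) hN
    linarith
  have htσ : (m:ℝ)*s * Real.log (1/s) ≤ (n:ℝ) * Real.log (1/s) :=
    mul_le_mul_of_nonpos_right ht_ge hlσ0
  have htlm : (m:ℝ)*s * Real.log m
      ≤ (n:ℝ)*Real.log n + s*Real.log n + s + s^2 + (n:ℝ)*Real.log (1/s) := by
    rw [hlmt, mul_add]; linarith
  have hsup : s * Real.log (Nat.factorial m)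
      ≤ s + (s/2) * Real.log m + (m:ℝ)*s*Real.log m - (m:ℝ)*s := by
    have h1 := mul_le_mul_of_nonneg_left (log_fact_le m hm1) hs0.le
    calc s * Real.log (Nat.factorial m)
        ≤ s * (1 + (1/2)*Real.log m + m*Real.log m - m) := h1
      _ = s + (s/2) * Real.log m + (m:ℝ)*s*Real.log m - (m:ℝ)*s := by ring
  have hlm2 : (s/2) * Real.log m ≤ (s/2) * (1 + Real.log n) :=
    mul_le_mul_of_nonneg_left hlm (by positivity)
  have hlo := le_log_fact n hn
  linarith [hsup, hlm2, htlm, hlo, ht_ge, hln0, hs0]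
end
end

section
/- Let d ≥ 1, σ ∈ (0,1), τ > 0. There is a constant C depending only on d, σ, τ, K, m with the following property: for K > 1 and m ≥ 0, for all measurable f, w : ℝ^d → ℂ with e^{τ⟨·⟩^σ} f ∈ L²(ℝ^d) and ⟨·⟩^m w ∈ L²(ℝ^d), and for every c ∈ (0,1) with exp(τ⟨ξ⟩^σ − τ⟨η⟩^σ) ≤ exp(c·τ⟨ξ−η⟩^σ) holding on the region R₁ = {(ξ,η) : |ξ−η| ≤ |η|/K}, one has ‖ ∫_{{η : |ξ−η| ≤ |η|/K}} e^{τ⟨ξ⟩^σ − τ⟨η⟩^σ} ⟨ξ⟩^m |f(ξ−η)| |w(η)| dη ‖_{L²_ξ} ≤ C · ‖e^{−τ(1−c)⟨·⟩^σ}‖_{L²} · ‖e^{τ⟨·⟩^σ} f‖_{L²} · ‖⟨·⟩^m w‖_{L²}. -/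
open MeasureTheory Real
open scoped FourierTransform ENNReal

noncomputable section

/-! On the region `‖ξ - η‖ ≤ ‖η‖ / K` one has `⟨ξ⟩ ≤ (1 + 1/K)⟨η⟩`, so together with the Gevrey
hypothesis the integrand is at most `(1 + 1/K)^m` times `⟨η⟩^m |w(η)| · e^{cτ⟨ξ-η⟩^σ} |f(ξ-η)|`,
a convolution of an `L²` function with an `L¹` function. Young's inequality
`‖h ⋆ g‖₂ ≤ ‖h‖₂ ‖g‖₁` and Cauchy–Schwarz for `e^{cτ⟨·⟩^σ} = e^{-τ(1-c)⟨·⟩^σ} · e^{τ⟨·⟩^σ}`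
give the bound. -/

theorem ENNReal.rpow_one_half_sq (x : ℝ≥0∞) : (x ^ (1 / 2 : ℝ)) ^ 2 = x := by
  rw [← ENNReal.rpow_natCast, ← ENNReal.rpow_mul]; norm_num

theorem ENNReal.sq_lintegral_mul_le {α : Type*} [MeasurableSpace α] {μ : Measure α}
    {a b : α → ℝ≥0∞} (ha : AEMeasurable a μ) (hb : AEMeasurable b μ) :
    (∫⁻ x, a x * b x ∂μ) ^ 2 ≤ (∫⁻ x, a x ∂μ) * ∫⁻ x, a x * b x ^ 2 ∂μ := by
  have hCS := ENNReal.lintegral_mul_le_Lp_mul_Lq μ .two_two (ha.pow_const (1 / 2 : ℝ))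
    ((ha.pow_const (1 / 2 : ℝ)).mul hb)
  have hsplit : ∀ x, a x * b x = (a x ^ (1 / 2 : ℝ)) * (a x ^ (1 / 2 : ℝ) * b x) := fun x => by
    rw [← mul_assoc, ← sq, ENNReal.rpow_one_half_sq]
  simp only [Pi.mul_apply, ← hsplit, mul_pow, ENNReal.rpow_two, ENNReal.rpow_one_half_sq] at hCS
  calc (∫⁻ x, a x * b x ∂μ) ^ 2
      ≤ ((∫⁻ x, a x ∂μ) ^ (1 / 2 : ℝ) * (∫⁻ x, a x * b x ^ 2 ∂μ) ^ (1 / 2 : ℝ)) ^ 2 := by gcongr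
    _ = (∫⁻ x, a x ∂μ) * ∫⁻ x, a x * b x ^ 2 ∂μ := by
      rw [mul_pow, ENNReal.rpow_one_half_sq, ENNReal.rpow_one_half_sq]

theorem eLpNorm_two_sq {α ε : Type*} [MeasurableSpace α] [ENorm ε] (f : α → ε) (μ : Measure α) :
    eLpNorm f 2 μ ^ 2 = ∫⁻ x, ‖f x‖ₑ ^ 2 ∂μ := by
  simpa using eLpNorm_nnreal_pow_eq_lintegral (f := f) (μ := μ) (p := 2) two_ne_zero

section Young

variable {G : Type*} [AddCommGroup G] [MeasurableSpace G] [MeasurableAdd₂ G] [MeasurableNeg G]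
  {μ : Measure G} [SFinite μ] [μ.IsAddLeftInvariant] [μ.IsNegInvariant]

theorem lintegral_sq_lconvolution_le {g h : G → ℝ≥0∞} (hg : Measurable g) (hh : Measurable h) :
    ∫⁻ x, (g ⋆ₗ[μ] h) x ^ 2 ∂μ ≤ (∫⁻ x, g x ^ 2 ∂μ) * (∫⁻ x, h x ∂μ) ^ 2 := by
  have htrans : ∀ x, ∫⁻ y, h (-y + x) ∂μ = ∫⁻ y, h y ∂μ := fun x => by
    simp_rw [neg_add_eq_sub]; exact lintegral_sub_left_eq_self h x
  have hprod : Measurable fun p : G × G => h (-p.2 + p.1) * g p.2 ^ 2 :=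
    (hh.comp (measurable_snd.neg.add measurable_fst)).mul ((hg.comp measurable_snd).pow_const 2)
  calc ∫⁻ x, (g ⋆ₗ[μ] h) x ^ 2 ∂μ
      = ∫⁻ x, (∫⁻ y, h (-y + x) * g y ∂μ) ^ 2 ∂μ := by
        simp only [lconvolution_def, mul_comm (g _)]
    _ ≤ ∫⁻ x, (∫⁻ y, h y ∂μ) * ∫⁻ y, h (-y + x) * g y ^ 2 ∂μ ∂μ := by
        refine lintegral_mono fun x => ?_
        rw [← htrans x]
        exact ENNReal.sq_lintegral_mul_le
          (hh.comp (measurable_neg.add_const x)).aemeasurable hg.aemeasurable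
    _ = (∫⁻ y, h y ∂μ) * ∫⁻ y, (∫⁻ x, h (-y + x) ∂μ) * g y ^ 2 ∂μ := by
        rw [lintegral_const_mul _ hprod.lintegral_prod_right',
          lintegral_lintegral_swap hprod.aemeasurable]
        exact congrArg _ (lintegral_congr fun y =>
          lintegral_mul_const (g y ^ 2) (hh.comp (measurable_const_add (-y))))
    _ = (∫⁻ x, g x ^ 2 ∂μ) * (∫⁻ x, h x ∂μ) ^ 2 := by
        simp_rw [lintegral_add_left_eq_self, lintegral_const_mul _ (hg.pow_const 2)]
        ring

theorem eLpNorm_two_lconvolution_le {g h : G → ℝ≥0∞} (hg : Measurable g) (hh : Measurable h) :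
    eLpNorm (g ⋆ₗ[μ] h) 2 μ ≤ eLpNorm g 2 μ * ∫⁻ x, h x ∂μ := by
  rw [← ENNReal.pow_le_pow_left_iff two_ne_zero, mul_pow, eLpNorm_two_sq, eLpNorm_two_sq]
  simpa only [enorm_eq_self] using lintegral_sq_lconvolution_le hg hh

end Young

theorem jap_pos {d : ℕ} (ξ : E d) : 0 < jap ξ := Real.sqrt_pos.mpr (by positivity)

@[fun_prop]
theorem continuous_jap {d : ℕ} : Continuous (jap (d := d)) := by
  unfold jap; fun_prop

theorem jap_le_mul_jap {d : ℕ} {a : ℝ} {ξ η : E d} (ha : 1 ≤ a) (h : ‖ξ‖ ≤ a * ‖η‖) :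
    jap ξ ≤ a * jap η := by
  have hη := jap_pos η
  rw [jap, Real.sqrt_le_iff, mul_pow, jap, Real.sq_sqrt (by positivity)]
  refine ⟨by positivity, ?_⟩
  have hξ : ‖ξ‖ ^ 2 ≤ (a * ‖η‖) ^ 2 := pow_le_pow_left₀ (norm_nonneg ξ) h 2
  nlinarith [sq_nonneg ‖η‖]

theorem jap_rpow_le_of_norm_sub_le {d : ℕ} {K m : ℝ} {ξ η : E d} (hK : 0 < K) (hm : 0 ≤ m)
    (h : ‖ξ - η‖ ≤ ‖η‖ / K) : jap ξ ^ m ≤ (1 + 1 / K) ^ m * jap η ^ m := by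
  have hξ : ‖ξ‖ ≤ (1 + 1 / K) * ‖η‖ := by
    have := norm_le_norm_sub_add ξ η
    rw [add_mul, one_mul, one_div_mul_eq_div]
    linarith
  rw [← Real.mul_rpow (by positivity) (jap_pos η).le]
  exact Real.rpow_le_rpow (jap_pos ξ).le (jap_le_mul_jap (by simp [hK.le]) hξ) hm

theorem lowFreq_kernel_le {d : ℕ} {σ τ c K m : ℝ} {ξ η : E d} (hK : 0 < K) (hm : 0 ≤ m)
    (hξη : ‖ξ - η‖ ≤ ‖η‖ / K)
    (hexp : Real.exp (τ * jap ξ ^ σ - τ * jap η ^ σ) ≤ Real.exp (c * τ * jap (ξ - η) ^ σ))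
    (a b : ℂ) :
    Real.exp (τ * jap ξ ^ σ - τ * jap η ^ σ) * jap ξ ^ m * ‖a‖ * ‖b‖ ≤
      (1 + 1 / K) ^ m * (‖jap η ^ m • b‖ *
        ‖Real.exp (-τ * (1 - c) * jap (ξ - η) ^ σ) • Real.exp (τ * jap (ξ - η) ^ σ) • a‖) := by
  have hsplit : Real.exp (c * τ * jap (ξ - η) ^ σ) =
      Real.exp (-τ * (1 - c) * jap (ξ - η) ^ σ) * Real.exp (τ * jap (ξ - η) ^ σ) := by
    rw [← Real.exp_add]; ring_nf
  simp only [norm_smul, Real.norm_eq_abs, abs_of_pos (Real.exp_pos _),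
    abs_of_pos (Real.rpow_pos_of_pos (jap_pos η) m)]
  calc Real.exp (τ * jap ξ ^ σ - τ * jap η ^ σ) * jap ξ ^ m * ‖a‖ * ‖b‖
      ≤ Real.exp (c * τ * jap (ξ - η) ^ σ) * ((1 + 1 / K) ^ m * jap η ^ m) * ‖a‖ * ‖b‖ := by
        have hjap := jap_rpow_le_of_norm_sub_le hK hm hξη
        gcongr
        exact Real.rpow_nonneg (jap_pos ξ).le m
    _ = _ := by rw [hsplit]; ring

theorem enorm_setIntegral_lowFreq_le {d : ℕ} {σ τ c K m : ℝ} (hK : 0 < K) (hm : 0 ≤ m)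
    (f w : E d → ℂ)
    (hexp : ∀ ξ η : E d, ‖ξ - η‖ ≤ ‖η‖ / K →
      Real.exp (τ * jap ξ ^ σ - τ * jap η ^ σ) ≤ Real.exp (c * τ * jap (ξ - η) ^ σ))
    (ξ : E d) :
    ‖∫ η in {η : E d | ‖ξ - η‖ ≤ ‖η‖ / K},
        Real.exp (τ * jap ξ ^ σ - τ * jap η ^ σ) * jap ξ ^ m * ‖f (ξ - η)‖ * ‖w η‖‖ₑ ≤
      ENNReal.ofReal ((1 + 1 / K) ^ m) *
        ((fun η => ‖jap η ^ m • w η‖ₑ) ⋆ₗ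
          fun ζ => ‖Real.exp (-τ * (1 - c) * jap ζ ^ σ) • Real.exp (τ * jap ζ ^ σ) • f ζ‖ₑ) ξ := by
  have hS : MeasurableSet {η : E d | ‖ξ - η‖ ≤ ‖η‖ / K} :=
    measurableSet_le (by fun_prop) (by fun_prop)
  refine (enorm_integral_le_lintegral_enorm _).trans ?_
  calc ∫⁻ η in {η : E d | ‖ξ - η‖ ≤ ‖η‖ / K},
        ‖Real.exp (τ * jap ξ ^ σ - τ * jap η ^ σ) * jap ξ ^ m * ‖f (ξ - η)‖ * ‖w η‖‖ₑ
      ≤ ∫⁻ η in {η : E d | ‖ξ - η‖ ≤ ‖η‖ / K}, ENNReal.ofReal ((1 + 1 / K) ^ m) *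
          (‖jap η ^ m • w η‖ₑ * ‖Real.exp (-τ * (1 - c) * jap (ξ - η) ^ σ) •
            Real.exp (τ * jap (ξ - η) ^ σ) • f (ξ - η)‖ₑ) := by
        refine setLIntegral_mono' hS fun η hη => ?_
        have hjap := Real.rpow_nonneg (jap_pos ξ).le m
        rw [Real.enorm_eq_ofReal (by positivity), ← ofReal_norm, ← ofReal_norm,
          ← ENNReal.ofReal_mul (norm_nonneg _), ← ENNReal.ofReal_mul (by positivity)]
        exact ENNReal.ofReal_le_ofReal (lowFreq_kernel_le hK hm hη (hexp ξ η hη) _ _)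
    _ ≤ ∫⁻ η, ENNReal.ofReal ((1 + 1 / K) ^ m) *
          (‖jap η ^ m • w η‖ₑ * ‖Real.exp (-τ * (1 - c) * jap (ξ - η) ^ σ) •
            Real.exp (τ * jap (ξ - η) ^ σ) • f (ξ - η)‖ₑ) := setLIntegral_le_lintegral _ _
    _ = _ := by
        rw [lintegral_const_mul' _ _ ENNReal.ofReal_ne_top]
        simp only [lconvolution_def, neg_add_eq_sub]

theorem stmt_17_general (d : ℕ) (σ τ : ℝ) :
    ∀ (K m : ℝ), 1 < K → 0 ≤ m →
    ∃ C : ℝ, 0 < C ∧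
      ∀ (f w : E d → ℂ), Measurable f → Measurable w →
        MemLp (fun ξ : E d => Real.exp (τ * jap ξ ^ σ) • f ξ) 2 volume →
        MemLp (fun ξ : E d => jap ξ ^ m • w ξ) 2 volume →
        ∀ c : ℝ, c ∈ Set.Ioo (0 : ℝ) 1 →
        (∀ ξ η : E d, ‖ξ - η‖ ≤ ‖η‖ / K →
          Real.exp (τ * jap ξ ^ σ - τ * jap η ^ σ)
            ≤ Real.exp (c * τ * jap (ξ - η) ^ σ)) →
        eLpNorm (fun ξ : E d =>
            ∫ η in {η : E d | ‖ξ - η‖ ≤ ‖η‖ / K},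
              Real.exp (τ * jap ξ ^ σ - τ * jap η ^ σ) * jap ξ ^ m *
                ‖f (ξ - η)‖ * ‖w η‖) 2 volume
          ≤ ENNReal.ofReal C *
              eLpNorm (fun ξ : E d => Real.exp (-τ * (1 - c) * jap ξ ^ σ)) 2 volume *
              eLpNorm (fun ξ : E d => Real.exp (τ * jap ξ ^ σ) • f ξ) 2 volume *
              eLpNorm (fun ξ : E d => jap ξ ^ m • w ξ) 2 volume := by
  intro K m hK hm
  have hK0 : 0 < K := one_pos.trans hK
  refine ⟨(1 + 1 / K) ^ m, by positivity, fun f w hf hw _ _ c _ hexp => ?_⟩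
  set A : E d → ℝ := fun ξ => Real.exp (-τ * (1 - c) * jap ξ ^ σ)
  set B : E d → ℂ := fun ξ => Real.exp (τ * jap ξ ^ σ) • f ξ
  set W : E d → ℂ := fun ξ => jap ξ ^ m • w ξ
  have hA : Measurable A := by fun_prop
  have hB : Measurable B := by fun_prop
  have hW : Measurable W := by fun_prop
  calc _ ≤ ENNReal.ofReal ((1 + 1 / K) ^ m) *
        eLpNorm ((fun η => ‖W η‖ₑ) ⋆ₗ fun ζ => ‖(A • B) ζ‖ₑ) 2 volume :=
        eLpNorm_le_nnreal_smul_eLpNorm_of_ae_le_mul'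
          (ae_of_all _ (enorm_setIntegral_lowFreq_le hK0 hm f w hexp)) 2
    _ ≤ ENNReal.ofReal ((1 + 1 / K) ^ m) * (eLpNorm W 2 volume * eLpNorm (A • B) 1 volume) := by
        rw [eLpNorm_one_eq_lintegral_enorm, ← eLpNorm_enorm W]
        gcongr
        exact eLpNorm_two_lconvolution_le hW.enorm (hA.smul hB).enorm
    _ ≤ ENNReal.ofReal ((1 + 1 / K) ^ m) *
          (eLpNorm W 2 volume * (eLpNorm A 2 volume * eLpNorm B 2 volume)) := by
        gcongr
        exact eLpNorm_smul_le_mul_eLpNorm hB.aestronglyMeasurable hA.aestronglyMeasurable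
    _ = _ := by ring

/-- Low-frequency (paraproduct region `R₁ = {|ξ−η| ≤ |η|/K}`)
estimate in the proof of boundedness of the conjugated multiplication operator. -/
theorem stmt_17 (d : ℕ) (hd : 1 ≤ d) (σ τ : ℝ) (hσ0 : 0 < σ) (hσ1 : σ < 1) (hτ : 0 < τ) :
    ∀ (K m : ℝ), 1 < K → 0 ≤ m →
    ∃ C : ℝ, 0 < C ∧
      ∀ (f w : E d → ℂ), Measurable f → Measurable w →
        MemLp (fun ξ : E d => Real.exp (τ * jap ξ ^ σ) • f ξ) 2 volume →
        MemLp (fun ξ : E d => jap ξ ^ m • w ξ) 2 volume →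
        ∀ c : ℝ, c ∈ Set.Ioo (0 : ℝ) 1 →
        (∀ ξ η : E d, ‖ξ - η‖ ≤ ‖η‖ / K →
          Real.exp (τ * jap ξ ^ σ - τ * jap η ^ σ)
            ≤ Real.exp (c * τ * jap (ξ - η) ^ σ)) →
        eLpNorm (fun ξ : E d =>
            ∫ η in {η : E d | ‖ξ - η‖ ≤ ‖η‖ / K},
              Real.exp (τ * jap ξ ^ σ - τ * jap η ^ σ) * jap ξ ^ m *
                ‖f (ξ - η)‖ * ‖w η‖) 2 volume
          ≤ ENNReal.ofReal C *
              eLpNorm (fun ξ : E d => Real.exp (-τ * (1 - c) * jap ξ ^ σ)) 2 volume *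
              eLpNorm (fun ξ : E d => Real.exp (τ * jap ξ ^ σ) • f ξ) 2 volume *
              eLpNorm (fun ξ : E d => jap ξ ^ m • w ξ) 2 volume :=
  stmt_17_general d σ τ
end
end
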